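/- arXiv:math/0202097 — 4 statements merged into one kernel-verified Lean document; each statement's English description precedes it below -/
import Mathlib

section
/- Let m₀, m₀' ∈ L^∞(𝕋) be non-singular, let h, h' ∈ L¹(𝕋) with h, h' ≥ 0, R_{m₀,m₀}h = h and R_{m₀',m₀'}h' = h', and let (π, U, H, φ) and (π', U', H', φ') be cyclic representations associated to h (with filter m₀) and to h' (with filter m₀') respectively. If h₀ ∈ L¹(𝕋) satisfies R_{m₀,m₀'}h₀ = h₀ and |h₀|² ≤ c·h·h' μ-a.e. for some constant c > 0, then there exists a unique bounded linear operator S : H' → H such that S U' = U S, S π'(f) = π(f) S for all f ∈ L^∞(𝕋), and ⟨φ, π(f) S φ'⟩ = ∫_𝕋 f h₀ dμ for all f ∈ L^∞(𝕋); moreover ‖S‖ ≤ √c. -/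
noncomputable section

open MeasureTheory Complex
open scoped ComplexConjugate ComplexInnerProductSpace

/-- An element of `L^∞(𝕋)`, realized as a bounded measurable 2π-periodic function on ℝ. -/
def IsFilter (f : ℝ → ℂ) : Prop :=
  Measurable f ∧ (∃ C : ℝ, ∀ x, ‖f x‖ ≤ C) ∧ ∀ x, f (x + 2 * Real.pi) = f x

/-- `m₀` is non-singular: it does not vanish on a set of positive measure. -/
def NonSingular (m : ℝ → ℂ) : Prop := ∀ᵐ x ∂(volume : Measure ℝ), m x ≠ 0

/-- The Ruelle transfer operator `R_{m₀,m₀'}` at scale `N`, written for 2π-periodic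
functions on ℝ. -/
def ruelle (N : ℕ) (m₀ m₀' : ℝ → ℂ) (f : ℝ → ℂ) : ℝ → ℂ := fun ω =>
  (N : ℂ)⁻¹ * ∑ l ∈ Finset.range N,
    conj (m₀ ((ω + 2 * Real.pi * l) / N)) * m₀' ((ω + 2 * Real.pi * l) / N) *
      f ((ω + 2 * Real.pi * l) / N)

/-- `h ∈ L¹(𝕋)`, as a 2π-periodic locally integrable function on ℝ. -/
def MemL1T (f : ℝ → ℂ) : Prop :=
  MeasureTheory.IntegrableOn f (Set.Ioc 0 (2 * Real.pi)) volume ∧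
    ∀ x, f (x + 2 * Real.pi) = f x

/-- The normalized integral over the circle: `∫_𝕋 f dμ = (2π)⁻¹ ∫_0^{2π} f`. -/
def circleInt (f : ℝ → ℂ) : ℂ :=
  (((2 * Real.pi)⁻¹ : ℝ) : ℂ) * ∫ x in Set.Ioc (0:ℝ) (2 * Real.pi), f x

/-- A (normal) covariant representation of the algebra `𝔄_N`: a unitary `U` on a complex
Hilbert space `H` together with a unital *-representation `rep` of `L^∞(𝕋)` satisfying
`U rep(f) U⁻¹ = rep(f(z^N))`. -/
structure CovRep (N : ℕ) (H : Type*) [NormedAddCommGroup H] [InnerProductSpace ℂ H]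
    [CompleteSpace H] where
  U : H ≃ₗᵢ[ℂ] H
  rep : (ℝ → ℂ) → H →L[ℂ] H
  rep_one : rep 1 = 1
  rep_add : ∀ f g, IsFilter f → IsFilter g → rep (f + g) = rep f + rep g
  rep_smul : ∀ (c : ℂ) (f), IsFilter f → rep (c • f) = c • rep f
  rep_mul : ∀ f g, IsFilter f → IsFilter g → rep (f * g) = (rep f).comp (rep g)
  rep_star : ∀ f, IsFilter f →
    rep (fun x => conj (f x)) = ContinuousLinearMap.adjoint (rep f)
  covariant : ∀ f, IsFilter f → ∀ v : H, U (rep f v) = rep (fun x => f ((N : ℝ) * x)) (U v)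

/-- The cyclic representation of `𝔄_N` associated to an eigenfunction `h ≥ 0`,
`R_{m₀,m₀}h = h`: a covariant representation with a cyclic vector `phi` satisfying the
scaling relation `U phi = rep(m₀) phi` and `⟪phi, rep(f) phi⟫ = ∫_𝕋 f h dμ`. -/
structure CyclicRep (N : ℕ) (m₀ : ℝ → ℂ) (h : ℝ → ℝ) (H : Type*) [NormedAddCommGroup H]
    [InnerProductSpace ℂ H] [CompleteSpace H] extends CovRep N H where
  phi : H
  scaling : U phi = rep m₀ phi
  moment : ∀ f, IsFilter f → ⟪phi, rep f phi⟫ = circleInt fun x => f x * (h x : ℂ)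
  cyclic : Dense (Submodule.span ℂ
    {v : H | ∃ (n : ℕ) (f : ℝ → ℂ), IsFilter f ∧
      v = (fun w => U.symm w)^[n] (rep f phi)} : Set H)

/-!
The matrix coefficients of the operator are forced: `⟪U⁻ᵏπ(f)φ, S U'⁻ᵏπ'(g)φ'⟫ = ∫_𝕋 f̄ g h₀`.
Since `U⁻ᵏπ(f)φ = U⁻ᵏ⁻¹π(f(z^N) m₀)φ`, these prescriptions agree between levels because the
pairing `∫_𝕋 f̄ g h₀` is invariant under `(f, g) ↦ (f(z^N) m₀, g(z^N) m₀')`: this is the duality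
`∫ F(z^N) m̄₀ m₀' h₀ = ∫ F · R_{m₀,m₀'}h₀` together with `R_{m₀,m₀'}h₀ = h₀`. By Cauchy–Schwarz and
`|h₀|² ≤ c h h'` the pairing is bounded by `√c ‖π(f)φ‖ ‖π'(g)φ'‖`, so it is a bounded
sesquilinear form on the dense spans of the generators, i.e. an operator of norm `≤ √c`.
Intertwining and uniqueness follow by comparing matrix coefficients on generators.
-/

open Filter

lemma isFilter_one : IsFilter (1 : ℝ → ℂ) :=
  ⟨measurable_const, ⟨1, fun _ => by simp⟩, fun _ => rfl⟩

namespace IsFilter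

variable {f g : ℝ → ℂ}

lemma exists_bound (hf : IsFilter f) : ∃ C, ∀ x, ‖f x‖ ≤ C := hf.2.1

lemma periodic (hf : IsFilter f) : Function.Periodic f (2 * Real.pi) := hf.2.2

lemma aestronglyMeasurable (hf : IsFilter f) {μ : Measure ℝ} : AEStronglyMeasurable f μ :=
  hf.1.aestronglyMeasurable

lemma add (hf : IsFilter f) (hg : IsFilter g) : IsFilter (f + g) := by
  obtain ⟨C, hC⟩ := hf.exists_bound
  obtain ⟨D, hD⟩ := hg.exists_bound
  exact ⟨hf.1.add hg.1, ⟨C + D, fun x => (norm_add_le _ _).trans (add_le_add (hC x) (hD x))⟩,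
    (hf.periodic.add hg.periodic :)⟩

lemma mul (hf : IsFilter f) (hg : IsFilter g) : IsFilter (f * g) := by
  obtain ⟨C, hC⟩ := hf.exists_bound
  obtain ⟨D, hD⟩ := hg.exists_bound
  refine ⟨hf.1.mul hg.1, ⟨C * D, fun x => ?_⟩, (hf.periodic.mul hg.periodic :)⟩
  rw [Pi.mul_apply, norm_mul]
  exact mul_le_mul (hC x) (hD x) (norm_nonneg _) ((norm_nonneg _).trans (hC x))

lemma smul (c : ℂ) (hf : IsFilter f) : IsFilter (c • f) := by
  obtain ⟨C, hC⟩ := hf.exists_bound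
  refine ⟨hf.1.const_smul c, ⟨‖c‖ * C, fun x => ?_⟩, fun x => by simp [hf.periodic x]⟩
  rw [Pi.smul_apply, norm_smul]
  exact mul_le_mul_of_nonneg_left (hC x) (norm_nonneg c)

lemma sub (hf : IsFilter f) (hg : IsFilter g) : IsFilter (f - g) := by
  simpa [sub_eq_add_neg] using hf.add (hg.smul (-1))

lemma star (hf : IsFilter f) : IsFilter fun x => conj (f x) := by
  obtain ⟨C, hC⟩ := hf.exists_bound
  exact ⟨Complex.continuous_conj.measurable.comp hf.1, ⟨C, fun x => by simpa using hC x⟩,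
    fun x => by simp [hf.periodic x]⟩

lemma comp_natCast_mul (hf : IsFilter f) (k : ℕ) : IsFilter fun x => f (k * x) := by
  obtain ⟨C, hC⟩ := hf.exists_bound
  refine ⟨hf.1.comp (measurable_const_mul _), ⟨C, fun x => hC _⟩, fun x => ?_⟩
  simpa [mul_add, mul_comm] using hf.periodic.nat_mul k (k * x)

lemma comp_pow_mul (hf : IsFilter f) (N k : ℕ) : IsFilter fun x => f ((N : ℝ) ^ k * x) := by
  simpa using hf.comp_natCast_mul (N ^ k)

end IsFilter

/-- In a cyclic representation `U π(f) φ = π(cascade N m₀ f) φ`. -/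
def cascade (N : ℕ) (m f : ℝ → ℂ) : ℝ → ℂ := fun x => f (N * x) * m x

lemma isFilter_cascade {N : ℕ} {m f : ℝ → ℂ} (hm : IsFilter m) (hf : IsFilter f) :
    IsFilter (cascade N m f) :=
  (by simpa using hf.comp_natCast_mul N : IsFilter fun x => f (N * x)).mul hm

lemma isFilter_iterate_cascade {N : ℕ} {m f : ℝ → ℂ} (hm : IsFilter m) (hf : IsFilter f)
    (k : ℕ) : IsFilter ((cascade N m)^[k] f) := by
  induction k with
  | zero => exact hf
  | succ k ih => rw [Function.iterate_succ_apply']; exact isFilter_cascade hm ih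

lemma natCast_mul_div_mem_uIcc (T : ℝ) {k N : ℕ} (hk : k ≤ N) :
    T * k / N ∈ Set.uIcc 0 T := by
  have h0 : (0 : ℝ) ≤ k / N := by positivity
  have h1 : (k : ℝ) / N ≤ 1 := div_le_one_of_le₀ (by exact_mod_cast hk) (by positivity)
  rw [mul_div_assoc]
  rcases le_total 0 T with hT | hT
  · rw [Set.uIcc_of_le hT]; constructor <;> nlinarith
  · rw [Set.uIcc_of_ge hT]; constructor <;> nlinarith

section Transfer

variable {Φ : ℝ → ℂ} {T : ℝ} {N : ℕ}

lemma IntervalIntegrable.comp_add_div (hΦ : IntervalIntegrable Φ volume 0 T)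
    (l : ℕ) (hl : l < N) :
    IntervalIntegrable (fun ω => Φ ((ω + T * l) / N)) volume 0 T := by
  have hN : N ≠ 0 := by omega
  have hpiece : IntervalIntegrable Φ volume (T * l / N) (T * (l + 1 : ℕ) / N) :=
    hΦ.mono_set (Set.uIcc_subset_uIcc (natCast_mul_div_mem_uIcc T hl.le)
      (natCast_mul_div_mem_uIcc T hl))
  have := (hpiece.comp_add_right (T * l / N)).comp_mul_right (c := (N : ℝ)⁻¹)
  convert this using 1
  · ext ω; congr 1; field_simp
  · field_simp; ring
  · push_cast; field_simp; ring

/-- Cutting `[0, T]` into `N` pieces of length `T / N` and rescaling each to `[0, T]`. -/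
lemma integral_eq_integral_average_comp_add_div (hN : N ≠ 0)
    (hΦ : IntervalIntegrable Φ volume 0 T) :
    ∫ x in 0..T, Φ x = ∫ ω in 0..T, (N : ℂ)⁻¹ * ∑ l ∈ Finset.range N, Φ ((ω + T * l) / N) := by
  have hN' : (N : ℝ) ≠ 0 := Nat.cast_ne_zero.2 hN
  have hpiece : ∀ l : ℕ, ∫ ω in 0..T, Φ ((ω + T * l) / N)
      = (N : ℝ) • ∫ x in T * l / N..T * (l + 1 : ℕ) / N, Φ x := by
    intro l
    simp_rw [add_div]
    rw [intervalIntegral.integral_comp_div_add Φ hN', zero_div, zero_add]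
    congr 2
    push_cast; ring
  rw [intervalIntegral.integral_const_mul, intervalIntegral.integral_finsetSum fun l hl =>
      hΦ.comp_add_div l (Finset.mem_range.1 hl)]
  simp_rw [hpiece, ← Finset.smul_sum]
  rw [intervalIntegral.sum_integral_adjacent_intervals (a := fun l : ℕ => T * l / N) fun k hk =>
      hΦ.mono_set (Set.uIcc_subset_uIcc (natCast_mul_div_mem_uIcc T hk.le)
        (natCast_mul_div_mem_uIcc T hk))]
  have hN'' : (N : ℂ) ≠ 0 := Nat.cast_ne_zero.2 hN
  simp [hN', hN'']

/-- The transfer operator is dual to `F ↦ F(N ·)` on `T`-periodic bounded functions. -/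
lemma integral_comp_mul_mul_eq_integral_mul_average {F Ψ : ℝ → ℂ} (hN : N ≠ 0)
    (hF : Function.Periodic F T) (hFm : Measurable F) {C : ℝ}
    (hFC : ∀ x, ‖F x‖ ≤ C) (hΨ : IntervalIntegrable Ψ volume 0 T) :
    ∫ x in 0..T, F (N * x) * Ψ x
      = ∫ ω in 0..T, F ω * ((N : ℂ)⁻¹ * ∑ l ∈ Finset.range N, Ψ ((ω + T * l) / N)) := by
  have hint : IntervalIntegrable (fun x => F (N * x) * Ψ x) volume 0 T := by
    rw [intervalIntegrable_iff] at hΨ ⊢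
    exact hΨ.bdd_mul (hFm.comp (measurable_const_mul _)).aestronglyMeasurable
      (Eventually.of_forall fun x => hFC _)
  rw [integral_eq_integral_average_comp_add_div hN hint]
  congr 1
  ext ω
  rw [Finset.mul_sum, Finset.mul_sum, Finset.mul_sum]
  refine Finset.sum_congr rfl fun l _ => ?_
  have : (N : ℝ) * ((ω + T * l) / N) = ω + l * T := by field_simp
  rw [this, hF.nat_mul l]
  ring

end Transfer

section CauchySchwarz

variable {α : Type*} [MeasurableSpace α] {μ : Measure α}

lemma integral_mul_le_sqrt_mul_sqrt {a b : α → ℝ} (ha : 0 ≤ᵐ[μ] a) (hb : 0 ≤ᵐ[μ] b)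
    (ha2 : MemLp a 2 μ) (hb2 : MemLp b 2 μ) :
    ∫ x, a x * b x ∂μ ≤ √(∫ x, a x ^ 2 ∂μ) * √(∫ x, b x ^ 2 ∂μ) := by
  have h2 : ENNReal.ofReal 2 = 2 := by simp
  have := integral_mul_le_Lp_mul_Lq_of_nonneg Real.HolderConjugate.two_two ha hb
    (by rwa [h2]) (by rwa [h2])
  simpa only [Real.sqrt_eq_rpow, ← Real.rpow_natCast, Nat.cast_ofNat, one_div] using this

lemma norm_integral_conj_mul_mul_le {f g k : α → ℂ} {u v : α → ℝ} {c : ℝ} (hc : 0 ≤ c)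
    (hu : ∀ x, 0 ≤ u x) (hv : ∀ x, 0 ≤ v x) (hk : ∀ᵐ x ∂μ, ‖k x‖ ^ 2 ≤ c * u x * v x)
    (hfu : Integrable (fun x => ‖f x‖ ^ 2 * u x) μ)
    (hgv : Integrable (fun x => ‖g x‖ ^ 2 * v x) μ) :
    ‖∫ x, conj (f x) * g x * k x ∂μ‖
      ≤ √c * √(∫ x, ‖f x‖ ^ 2 * u x ∂μ) * √(∫ x, ‖g x‖ ^ 2 * v x ∂μ) := by
  set a : α → ℝ := fun x => √(‖f x‖ ^ 2 * u x)
  set b : α → ℝ := fun x => √(‖g x‖ ^ 2 * v x)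
  have ha_sq : (fun x => a x ^ 2) = fun x => ‖f x‖ ^ 2 * u x :=
    funext fun x => Real.sq_sqrt (by have := hu x; positivity)
  have hb_sq : (fun x => b x ^ 2) = fun x => ‖g x‖ ^ 2 * v x :=
    funext fun x => Real.sq_sqrt (by have := hv x; positivity)
  have ha2 : MemLp a 2 μ := (memLp_two_iff_integrable_sq
    (Real.continuous_sqrt.comp_aestronglyMeasurable hfu.1)).2 (ha_sq ▸ hfu)
  have hb2 : MemLp b 2 μ := (memLp_two_iff_integrable_sq
    (Real.continuous_sqrt.comp_aestronglyMeasurable hgv.1)).2 (hb_sq ▸ hgv)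
  have hpointwise : ∀ᵐ x ∂μ, ‖conj (f x) * g x * k x‖ ≤ √c * (a x * b x) := by
    filter_upwards [hk] with x hx
    have hkx : ‖k x‖ ≤ √c * √(u x) * √(v x) := by
      rw [← Real.sqrt_mul hc, ← Real.sqrt_mul (mul_nonneg hc (hu x))]
      exact Real.le_sqrt_of_sq_le hx
    simp only [a, b, Real.sqrt_mul (sq_nonneg _), Real.sqrt_sq (norm_nonneg _), norm_mul,
      RCLike.norm_conj]
    calc ‖f x‖ * ‖g x‖ * ‖k x‖ ≤ ‖f x‖ * ‖g x‖ * (√c * √(u x) * √(v x)) := by gcongr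
      _ = √c * (‖f x‖ * √(u x) * (‖g x‖ * √(v x))) := by ring
  calc ‖∫ x, conj (f x) * g x * k x ∂μ‖
      ≤ ∫ x, ‖conj (f x) * g x * k x‖ ∂μ := norm_integral_le_integral_norm _
    _ ≤ ∫ x, √c * (a x * b x) ∂μ :=
      integral_mono_of_nonneg (ae_of_all _ fun _ => norm_nonneg _)
        ((ha2.integrable_mul hb2).const_mul _) hpointwise
    _ = √c * ∫ x, a x * b x ∂μ := integral_const_mul _ _
    _ ≤ √c * (√(∫ x, a x ^ 2 ∂μ) * √(∫ x, b x ^ 2 ∂μ)) := by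
      gcongr
      exact integral_mul_le_sqrt_mul_sqrt (ae_of_all _ fun _ => Real.sqrt_nonneg _)
        (ae_of_all _ fun _ => Real.sqrt_nonneg _) ha2 hb2
    _ = _ := by rw [ha_sq, hb_sq, mul_assoc]

end CauchySchwarz

section DenseExtension

variable {E F : Type*} [NormedAddCommGroup E] [InnerProductSpace ℂ E] [CompleteSpace E]
  [NormedAddCommGroup F] [InnerProductSpace ℂ F] [CompleteSpace F]

theorem exists_clm_inner_eq_of_dense {G : Submodule ℂ E} {G' : Submodule ℂ F}
    (hG : Dense (G : Set E)) (hG' : Dense (G' : Set F)) (B : G →ₗ⋆[ℂ] G' →ₗ[ℂ] ℂ) {C : ℝ}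
    (hC : 0 ≤ C) (hB : ∀ (ξ : G) (η : G'), ‖B ξ η‖ ≤ C * ‖ξ‖ * ‖η‖) :
    ∃ S : F →L[ℂ] E, (∀ (ξ : G) (η : G'), ⟪(ξ : E), S η⟫ = B ξ η) ∧ ‖S‖ ≤ C := by
  have hι : DenseRange G.subtype := hG.denseRange_val
  have hι' : DenseRange G'.subtype := hG'.denseRange_val
  have hBξ : ∀ (ξ : G) (η : G'), ‖B ξ η‖ ≤ (C * ‖ξ‖) * ‖G'.subtype η‖ := hB
  let ℓ : G → F →L[ℂ] ℂ := fun ξ => (B ξ).extendOfNorm G'.subtype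
  have hT₀ : ∀ (ξ : G) (η : G'), ⟪(InnerProductSpace.toDual ℂ F).symm (ℓ ξ), (η : F)⟫ = B ξ η := by
    intro ξ η
    rw [InnerProductSpace.toDual_symm_apply]
    exact LinearMap.extendOfNorm_eq hι' ⟨_, hBξ ξ⟩ η
  let T₀ : G →ₗ[ℂ] F :=
    { toFun := fun ξ => (InnerProductSpace.toDual ℂ F).symm (ℓ ξ)
      map_add' := fun ξ ξ' => hG'.eq_of_inner_left ℂ fun η hη => by
        rw [inner_add_left, hT₀ ξ ⟨η, hη⟩, hT₀ ξ' ⟨η, hη⟩, hT₀ (ξ + ξ') ⟨η, hη⟩, map_add,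
          LinearMap.add_apply]
      map_smul' := fun c ξ => hG'.eq_of_inner_left ℂ fun η hη => by
        rw [inner_smul_left, hT₀ ξ ⟨η, hη⟩, hT₀ (c • ξ) ⟨η, hη⟩, LinearMap.map_smulₛₗ,
          LinearMap.smul_apply, smul_eq_mul, RingHom.id_apply] }
  have hT₀n : ∀ ξ, ‖T₀ ξ‖ ≤ C * ‖G.subtype ξ‖ := fun ξ => by
    simpa [T₀] using LinearMap.opNorm_extendOfNorm_le hι' (by positivity) (hBξ ξ)
  refine ⟨ContinuousLinearMap.adjoint (T₀.extendOfNorm G.subtype), fun ξ η => ?_, ?_⟩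
  · rw [ContinuousLinearMap.adjoint_inner_right]
    exact (congrArg (⟪·, (η : F)⟫) (LinearMap.extendOfNorm_eq hι ⟨C, hT₀n⟩ ξ)).trans (hT₀ ξ η)
  · rw [LinearIsometryEquiv.norm_map]
    exact LinearMap.opNorm_extendOfNorm_le hι hC hT₀n

end DenseExtension

/-- Normalized Haar measure of `𝕋`, on the fundamental domain `(0, 2π]`. -/
def circleMeasure : Measure ℝ :=
  ENNReal.ofReal (2 * Real.pi)⁻¹ • volume.restrict (Set.Ioc 0 (2 * Real.pi))

lemma circleInt_eq_integral (f : ℝ → ℂ) : circleInt f = ∫ x, f x ∂circleMeasure := by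
  rw [circleMeasure, integral_smul_measure, ENNReal.toReal_ofReal (by positivity),
    Complex.real_smul, circleInt]

lemma circleInt_eq_intervalIntegral (f : ℝ → ℂ) :
    circleInt f = ((2 * Real.pi)⁻¹ : ℝ) * ∫ x in 0..2 * Real.pi, f x := by
  rw [circleInt, intervalIntegral.integral_of_le (by positivity)]

lemma MemL1T.integrable {f : ℝ → ℂ} (hf : MemL1T f) : Integrable f circleMeasure :=
  hf.1.smul_measure ENNReal.ofReal_ne_top

lemma MemL1T.intervalIntegrable {f : ℝ → ℂ} (hf : MemL1T f) :
    IntervalIntegrable f volume 0 (2 * Real.pi) := by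
  rw [intervalIntegrable_iff_integrableOn_Ioc_of_le (by positivity)]
  exact hf.1

lemma IsFilter.integrable_mul {p f : ℝ → ℂ} {μ : Measure ℝ} (hp : IsFilter p)
    (hf : Integrable f μ) : Integrable (fun x => p x * f x) μ := by
  obtain ⟨C, hC⟩ := hp.exists_bound
  exact hf.bdd_mul hp.aestronglyMeasurable (ae_of_all _ hC)

lemma IsFilter.intervalIntegrable_mul {p f : ℝ → ℂ} {a b : ℝ} (hp : IsFilter p)
    (hf : IntervalIntegrable f volume a b) :
    IntervalIntegrable (fun x => p x * f x) volume a b := by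
  rw [intervalIntegrable_iff] at hf ⊢
  exact hp.integrable_mul hf

lemma MemL1T.integrable_ofReal {u : ℝ → ℝ} (hu : MemL1T fun x => (u x : ℂ)) :
    Integrable u circleMeasure := by
  simpa using hu.integrable.re

lemma IsFilter.integrable_norm_sq_mul {f : ℝ → ℂ} {u : ℝ → ℝ} {μ : Measure ℝ} (hf : IsFilter f)
    (hu : Integrable u μ) : Integrable (fun x => ‖f x‖ ^ 2 * u x) μ := by
  obtain ⟨C, hC⟩ := hf.exists_bound
  refine hu.bdd_mul (c := C ^ 2) (hf.1.norm.pow_const 2).aestronglyMeasurable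
    (ae_of_all _ fun x => ?_)
  rw [norm_pow, norm_norm]
  exact pow_le_pow_left₀ (norm_nonneg _) (hC x) 2

def pairing (h₀ f g : ℝ → ℂ) : ℂ := circleInt fun x => conj (f x) * g x * h₀ x

section Pairing

variable {h₀ f f' g g' : ℝ → ℂ}

lemma integrable_conj_mul_mul (hh₀ : MemL1T h₀) (hf : IsFilter f) (hg : IsFilter g) :
    Integrable (fun x => conj (f x) * g x * h₀ x) circleMeasure :=
  (hf.star.mul hg).integrable_mul hh₀.integrable

lemma pairing_add_left (hh₀ : MemL1T h₀) (hf : IsFilter f) (hf' : IsFilter f')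
    (hg : IsFilter g) : pairing h₀ (f + f') g = pairing h₀ f g + pairing h₀ f' g := by
  simp only [pairing, circleInt_eq_integral]
  rw [← integral_add (integrable_conj_mul_mul hh₀ hf hg) (integrable_conj_mul_mul hh₀ hf' hg)]
  congr 1 with x
  simp only [Pi.add_apply, map_add]
  ring

lemma pairing_add_right (hh₀ : MemL1T h₀) (hf : IsFilter f) (hg : IsFilter g)
    (hg' : IsFilter g') : pairing h₀ f (g + g') = pairing h₀ f g + pairing h₀ f g' := by
  simp only [pairing, circleInt_eq_integral]
  rw [← integral_add (integrable_conj_mul_mul hh₀ hf hg) (integrable_conj_mul_mul hh₀ hf hg')]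
  congr 1 with x
  simp only [Pi.add_apply]
  ring

lemma pairing_smul_left (c : ℂ) : pairing h₀ (c • f) g = conj c * pairing h₀ f g := by
  simp only [pairing, circleInt_eq_integral, ← integral_const_mul]
  congr 1 with x
  simp only [Pi.smul_apply, smul_eq_mul, map_mul]
  ring

lemma pairing_smul_right (c : ℂ) : pairing h₀ f (c • g) = c * pairing h₀ f g := by
  simp only [pairing, circleInt_eq_integral, ← integral_const_mul]
  congr 1 with x
  simp only [Pi.smul_apply, smul_eq_mul]
  ring

lemma pairing_sub_left (hh₀ : MemL1T h₀) (hf : IsFilter f) (hf' : IsFilter f')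
    (hg : IsFilter g) : pairing h₀ (f - f') g = pairing h₀ f g - pairing h₀ f' g := by
  rw [sub_eq_add_neg, ← neg_one_smul ℂ f', pairing_add_left hh₀ hf (hf'.smul _) hg,
    pairing_smul_left]
  simp [sub_eq_add_neg]

lemma pairing_sub_right (hh₀ : MemL1T h₀) (hf : IsFilter f) (hg : IsFilter g)
    (hg' : IsFilter g') : pairing h₀ f (g - g') = pairing h₀ f g - pairing h₀ f g' := by
  rw [sub_eq_add_neg, ← neg_one_smul ℂ g', pairing_add_right hh₀ hf hg (hg'.smul _),
    pairing_smul_right]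
  ring

lemma pairing_conj_mul_left (q : ℝ → ℂ) :
    pairing h₀ ((fun x => conj (q x)) * f) g = pairing h₀ f (q * g) := by
  simp only [pairing, Pi.mul_apply, map_mul, Complex.conj_conj]
  congr 1 with x
  ring

lemma pairing_cascade {N : ℕ} (hN : N ≠ 0) {m₀ m₀' : ℝ → ℂ} (hm₀ : IsFilter m₀)
    (hm₀' : IsFilter m₀') (hh₀ : MemL1T h₀)
    (hR : ∀ᵐ ω ∂(volume : Measure ℝ), ruelle N m₀ m₀' h₀ ω = h₀ ω)
    (hf : IsFilter f) (hg : IsFilter g) :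
    pairing h₀ (cascade N m₀ f) (cascade N m₀' g) = pairing h₀ f g := by
  obtain ⟨C, hC⟩ := (hf.star.mul hg).exists_bound
  have hΨ : IntervalIntegrable (fun x => conj (m₀ x) * m₀' x * h₀ x) volume 0 (2 * Real.pi) :=
    (hm₀.star.mul hm₀').intervalIntegrable_mul hh₀.intervalIntegrable
  simp only [pairing, circleInt_eq_intervalIntegral]
  congr 1
  calc ∫ x in 0..2 * Real.pi, conj (cascade N m₀ f x) * cascade N m₀' g x * h₀ x
      = ∫ x in 0..2 * Real.pi, (fun y => conj (f y) * g y) (N * x)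
          * (conj (m₀ x) * m₀' x * h₀ x) := by
        congr 1 with x
        simp only [cascade, map_mul]
        ring
    _ = ∫ ω in 0..2 * Real.pi, conj (f ω) * g ω * ruelle N m₀ m₀' h₀ ω :=
        integral_comp_mul_mul_eq_integral_mul_average hN (hf.star.mul hg).periodic
          (hf.star.mul hg).1 hC hΨ
    _ = ∫ ω in 0..2 * Real.pi, conj (f ω) * g ω * h₀ ω :=
        intervalIntegral.integral_congr_ae (hR.mono fun ω hω _ => by rw [hω])

lemma pairing_iterate_cascade {N : ℕ} {m₀ m₀' : ℝ → ℂ} (hm₀ : IsFilter m₀)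
    (hm₀' : IsFilter m₀')
    (hinv : ∀ f g, IsFilter f → IsFilter g →
      pairing h₀ (cascade N m₀ f) (cascade N m₀' g) = pairing h₀ f g)
    (i : ℕ) (hf : IsFilter f) (hg : IsFilter g) :
    pairing h₀ ((cascade N m₀)^[i] f) ((cascade N m₀')^[i] g) = pairing h₀ f g := by
  induction i with
  | zero => rfl
  | succ i ih =>
    rw [Function.iterate_succ_apply', Function.iterate_succ_apply',
      hinv _ _ (isFilter_iterate_cascade hm₀ hf i) (isFilter_iterate_cascade hm₀' hg i), ih]

end Pairing

lemma LinearIsometryEquiv.coe_pow {R E : Type*} [Semiring R] [SeminormedAddCommGroup E]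
    [Module R E] (e : E ≃ₗᵢ[R] E) (n : ℕ) : ⇑(e ^ n) = (⇑e)^[n] := by
  induction n with
  | zero => rfl
  | succ n ih => rw [pow_succ', LinearIsometryEquiv.coe_mul, ih, Function.iterate_succ']

namespace CovRep

variable {N : ℕ} {H : Type*} [NormedAddCommGroup H] [InnerProductSpace ℂ H] [CompleteSpace H]
  (σ : CovRep N H) {f g : ℝ → ℂ}

lemma rep_sub (hf : IsFilter f) (hg : IsFilter g) : σ.rep (f - g) = σ.rep f - σ.rep g := by
  rw [sub_eq_add_neg, ← neg_one_smul ℂ g, σ.rep_add f _ hf (hg.smul _), σ.rep_smul _ g hg,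
    neg_one_smul, ← sub_eq_add_neg]

lemma rep_apply_rep (hf : IsFilter f) (hg : IsFilter g) (x : H) :
    σ.rep f (σ.rep g x) = σ.rep (f * g) x := by
  rw [σ.rep_mul f g hf hg, ContinuousLinearMap.comp_apply]

lemma inner_rep_left (hf : IsFilter f) (x y : H) :
    ⟪σ.rep f x, y⟫ = ⟪x, σ.rep (fun t => conj (f t)) y⟫ := by
  rw [σ.rep_star f hf, ContinuousLinearMap.adjoint_inner_right]

lemma inner_rep_right (hf : IsFilter f) (x y : H) :
    ⟪x, σ.rep f y⟫ = ⟪σ.rep (fun t => conj (f t)) x, y⟫ := by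
  rw [σ.inner_rep_left hf.star]
  simp only [Complex.conj_conj]

lemma rep_U_symm (hf : IsFilter f) (x : H) :
    σ.rep f (σ.U.symm x) = σ.U.symm (σ.rep (fun t => f (N * t)) x) := by
  rw [σ.U.eq_symm_apply, σ.covariant f hf, σ.U.apply_symm_apply]

lemma rep_U_inv_pow (hf : IsFilter f) (n : ℕ) (x : H) :
    σ.rep f ((σ.U⁻¹ ^ n) x) = (σ.U⁻¹ ^ n) (σ.rep (fun t => f ((N : ℝ) ^ n * t)) x) := by
  induction n generalizing f x with
  | zero => simp
  | succ n ih =>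
    rw [pow_succ, LinearIsometryEquiv.coe_mul, Function.comp_apply, Function.comp_apply, ih hf,
      LinearIsometryEquiv.coe_inv, σ.rep_U_symm (hf.comp_pow_mul N n)]
    simp only [pow_succ, mul_assoc]

end CovRep

namespace CyclicRep

variable {N : ℕ} {m₀ : ℝ → ℂ} {h : ℝ → ℝ} {H : Type*} [NormedAddCommGroup H]
  [InnerProductSpace ℂ H] [CompleteSpace H] (ρ : CyclicRep N m₀ h H) {f g : ℝ → ℂ}

def gen (n : ℕ) (f : ℝ → ℂ) : H := (ρ.U⁻¹ ^ n) (ρ.rep f ρ.phi)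

lemma gen_add (n : ℕ) (hf : IsFilter f) (hg : IsFilter g) :
    ρ.gen n (f + g) = ρ.gen n f + ρ.gen n g := by
  simp only [gen, ρ.rep_add f g hf hg, add_apply, map_add]

lemma gen_sub (n : ℕ) (hf : IsFilter f) (hg : IsFilter g) :
    ρ.gen n (f - g) = ρ.gen n f - ρ.gen n g := by
  simp only [gen, ρ.rep_sub hf hg, sub_apply, map_sub]

lemma gen_smul (n : ℕ) (c : ℂ) (hf : IsFilter f) : ρ.gen n (c • f) = c • ρ.gen n f := by
  simp only [gen, ρ.rep_smul c f hf, smul_apply, map_smul]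

lemma gen_succ (n : ℕ) (f : ℝ → ℂ) : ρ.gen (n + 1) f = ρ.U.symm (ρ.gen n f) := by
  simp only [gen, pow_succ', LinearIsometryEquiv.coe_mul, Function.comp_apply,
    LinearIsometryEquiv.coe_inv]

lemma U_gen_succ (n : ℕ) (f : ℝ → ℂ) : ρ.U (ρ.gen (n + 1) f) = ρ.gen n f := by
  rw [gen_succ, LinearIsometryEquiv.apply_symm_apply]

lemma gen_eq_gen_succ_cascade (hm₀ : IsFilter m₀) (n : ℕ) (hf : IsFilter f) :
    ρ.gen n f = ρ.gen (n + 1) (cascade N m₀ f) := by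
  have hU : ρ.rep (cascade N m₀ f) ρ.phi = ρ.U (ρ.rep f ρ.phi) := by
    rw [ρ.covariant f hf, ρ.scaling, ρ.rep_apply_rep (hf.comp_natCast_mul N) hm₀]
    rfl
  simp only [gen, pow_succ, LinearIsometryEquiv.coe_mul, Function.comp_apply, hU,
    LinearIsometryEquiv.coe_inv, LinearIsometryEquiv.symm_apply_apply]

lemma gen_eq_gen_iterate_cascade (hm₀ : IsFilter m₀) (hf : IsFilter f) {n k : ℕ}
    (hnk : n ≤ k) : ρ.gen n f = ρ.gen k ((cascade N m₀)^[k - n] f) := by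
  obtain ⟨j, rfl⟩ := Nat.exists_eq_add_of_le hnk
  rw [Nat.add_sub_cancel_left]
  induction j with
  | zero => rfl
  | succ j ih =>
    rw [ih (Nat.le_add_right n j), ← add_assoc, Function.iterate_succ_apply',
      ρ.gen_eq_gen_succ_cascade hm₀ _ (isFilter_iterate_cascade hm₀ hf j)]

lemma rep_gen (n : ℕ) {p : ℝ → ℂ} (hp : IsFilter p) (hf : IsFilter f) :
    ρ.rep p (ρ.gen n f) = ρ.gen n ((fun x => p ((N : ℝ) ^ n * x)) * f) := by
  rw [gen, ρ.rep_U_inv_pow hp, ρ.rep_apply_rep (hp.comp_pow_mul N n) hf, gen]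

lemma inner_gen_gen (n : ℕ) (hf : IsFilter f) (hg : IsFilter g) :
    ⟪ρ.gen n f, ρ.gen n g⟫ = circleInt fun x => conj (f x) * g x * h x := by
  rw [gen, gen, LinearIsometryEquiv.inner_map_map, ρ.inner_rep_left hf,
    ρ.rep_apply_rep hf.star hg, ρ.moment _ (hf.star.mul hg)]
  rfl

lemma norm_gen (n : ℕ) (hf : IsFilter f) :
    ‖ρ.gen n f‖ = √(∫ x, ‖f x‖ ^ 2 * h x ∂circleMeasure) := by
  have hre : ∀ x, conj (f x) * f x * (h x : ℂ) = ((‖f x‖ ^ 2 * h x : ℝ) : ℂ) := fun x => by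
    rw [Complex.conj_mul']; push_cast; ring
  have hsq : ‖ρ.gen n f‖ ^ 2 = ∫ x, ‖f x‖ ^ 2 * h x ∂circleMeasure := by
    rw [← inner_self_eq_norm_sq (𝕜 := ℂ), ρ.inner_gen_gen n hf hf, circleInt_eq_integral]
    simp only [hre, integral_complex_ofReal]
    exact Complex.ofReal_re _
  rw [← hsq, Real.sqrt_sq (norm_nonneg _)]

/-- The generators form a submodule, since two of them can be lifted to a common level. -/
def genSubmodule (hm₀ : IsFilter m₀) : Submodule ℂ H where
  carrier := {v | ∃ n f, IsFilter f ∧ v = ρ.gen n f}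
  add_mem' := by
    rintro _ _ ⟨n, f, hf, rfl⟩ ⟨k, g, hg, rfl⟩
    have hF := isFilter_iterate_cascade (N := N) hm₀ hf (max n k - n)
    have hG := isFilter_iterate_cascade (N := N) hm₀ hg (max n k - k)
    refine ⟨max n k, _, hF.add hG, ?_⟩
    rw [ρ.gen_add _ hF hG, ← ρ.gen_eq_gen_iterate_cascade hm₀ hf (le_max_left n k),
      ← ρ.gen_eq_gen_iterate_cascade hm₀ hg (le_max_right n k)]
  zero_mem' := ⟨0, (0 : ℂ) • 1, isFilter_one.smul 0, by rw [ρ.gen_smul 0 0 isFilter_one, zero_smul]⟩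
  smul_mem' := by
    rintro c _ ⟨n, f, hf, rfl⟩
    exact ⟨n, c • f, hf.smul c, (ρ.gen_smul n c hf).symm⟩

lemma dense_genSubmodule (hm₀ : IsFilter m₀) : Dense (ρ.genSubmodule hm₀ : Set H) := by
  have hset : {v : H | ∃ (n : ℕ) (f : ℝ → ℂ), IsFilter f ∧
      v = (fun w => ρ.U.symm w)^[n] (ρ.rep f ρ.phi)} = ρ.genSubmodule hm₀ := by
    ext v
    simp only [Set.mem_ofPred_eq, SetLike.mem_coe, genSubmodule, Submodule.mem_mk,
      AddSubmonoid.mem_mk, AddSubsemigroup.mem_mk, gen, LinearIsometryEquiv.coe_pow]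
    rfl
  simpa only [hset, Submodule.span_eq] using ρ.cyclic

lemma eventually_exists_gen_eq (hm₀ : IsFilter m₀) {v : H} (hv : v ∈ ρ.genSubmodule hm₀) :
    ∀ᶠ k in atTop, ∃ f, IsFilter f ∧ v = ρ.gen k f := by
  obtain ⟨n, f, hf, rfl⟩ := hv
  exact eventually_atTop.2 ⟨n, fun k hk =>
    ⟨_, isFilter_iterate_cascade hm₀ hf _, ρ.gen_eq_gen_iterate_cascade hm₀ hf hk⟩⟩

lemma gen_mem_genSubmodule (hm₀ : IsFilter m₀) (n : ℕ) {f : ℝ → ℂ} (hf : IsFilter f) :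
    ρ.gen n f ∈ ρ.genSubmodule hm₀ :=
  ⟨n, f, hf, rfl⟩

end CyclicRep

namespace CyclicRep

variable {N : ℕ} {m₀ m₀' : ℝ → ℂ} {h h' : ℝ → ℝ} {H H' : Type*}
  [NormedAddCommGroup H] [InnerProductSpace ℂ H] [CompleteSpace H]
  [NormedAddCommGroup H'] [InnerProductSpace ℂ H'] [CompleteSpace H']
  (ρ : CyclicRep N m₀ h H) (ρ' : CyclicRep N m₀' h' H') {h₀ : ℝ → ℂ}

lemma exists_gen_eq_gen_eq (hm₀ : IsFilter m₀) (hm₀' : IsFilter m₀') {v : H} {w : H'}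
    (hv : v ∈ ρ.genSubmodule hm₀) (hw : w ∈ ρ'.genSubmodule hm₀') :
    ∃ k, (∃ f, IsFilter f ∧ v = ρ.gen k f) ∧ ∃ g, IsFilter g ∧ w = ρ'.gen k g :=
  ((ρ.eventually_exists_gen_eq hm₀ hv).and (ρ'.eventually_exists_gen_eq hm₀' hw)).exists

lemma clm_ext (hm₀ : IsFilter m₀) (hm₀' : IsFilter m₀')
    {A B : H' →L[ℂ] H}
    (hAB : ∀ k f g, IsFilter f → IsFilter g →
      ⟪ρ.gen k f, A (ρ'.gen k g)⟫ = ⟪ρ.gen k f, B (ρ'.gen k g)⟫) : A = B := by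
  refine ContinuousLinearMap.ext_on (s := ρ'.genSubmodule hm₀')
    (by simpa only [Submodule.span_eq] using ρ'.dense_genSubmodule hm₀') fun w hw => ?_
  refine (ρ.dense_genSubmodule hm₀).eq_of_inner_right ℂ fun v hv => ?_
  obtain ⟨k, ⟨f, hf, rfl⟩, g, hg, rfl⟩ := ρ.exists_gen_eq_gen_eq ρ' hm₀ hm₀' hv hw
  exact hAB k f g hf hg

def RealizesPairing (h₀ : ℝ → ℂ) (S : H' →L[ℂ] H) : Prop :=
  ∀ k f g, IsFilter f → IsFilter g → ⟪ρ.gen k f, S (ρ'.gen k g)⟫ = pairing h₀ f g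

lemma norm_pairing_le (hh : MemL1T fun x => (h x : ℂ)) (hhpos : ∀ x, 0 ≤ h x)
    (hh' : MemL1T fun x => (h' x : ℂ)) (hh'pos : ∀ x, 0 ≤ h' x) {c : ℝ} (hc : 0 ≤ c)
    (hbound : ∀ᵐ x ∂(volume : Measure ℝ), ‖h₀ x‖ ^ 2 ≤ c * h x * h' x) (k : ℕ)
    {f g : ℝ → ℂ} (hf : IsFilter f) (hg : IsFilter g) :
    ‖pairing h₀ f g‖ ≤ √c * ‖ρ.gen k f‖ * ‖ρ'.gen k g‖ := by
  rw [pairing, circleInt_eq_integral, ρ.norm_gen k hf, ρ'.norm_gen k hg]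
  exact norm_integral_conj_mul_mul_le hc hhpos hh'pos
    (Measure.ae_smul_measure (ae_restrict_of_ae hbound) _)
    (hf.integrable_norm_sq_mul hh.integrable_ofReal)
    (hg.integrable_norm_sq_mul hh'.integrable_ofReal)

variable {ρ ρ'} {S : H' →L[ℂ] H}

lemma RealizesPairing.eq (hm₀ : IsFilter m₀) (hm₀' : IsFilter m₀')
    (hS : RealizesPairing ρ ρ' h₀ S) {T : H' →L[ℂ] H} (hT : RealizesPairing ρ ρ' h₀ T) :
    S = T :=
  ρ.clm_ext ρ' hm₀ hm₀' fun k f g hf hg => by rw [hS k f g hf hg, hT k f g hf hg]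

lemma RealizesPairing.map_U (hm₀ : IsFilter m₀) (hm₀' : IsFilter m₀')
    (hS : RealizesPairing ρ ρ' h₀ S) (v : H') : S (ρ'.U v) = ρ.U (S v) := by
  have hcomp : S.comp (ρ'.U.toContinuousLinearEquiv : H' →L[ℂ] H')
      = (ρ.U.toContinuousLinearEquiv : H →L[ℂ] H).comp S := by
    refine ρ.clm_ext ρ' hm₀ hm₀' fun k f g hf hg => ?_
    have hg' := isFilter_cascade (N := N) hm₀' hg
    simp only [ContinuousLinearMap.comp_apply, ContinuousLinearEquiv.coe_coe,
      LinearIsometryEquiv.coe_toContinuousLinearEquiv]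
    rw [ρ'.gen_eq_gen_succ_cascade hm₀' k hg, ρ'.U_gen_succ, hS k f _ hf hg',
      ← LinearIsometryEquiv.symm_symm ρ.U, ← LinearIsometryEquiv.inner_map_eq_flip,
      ← ρ.gen_succ, hS (k + 1) f _ hf hg']
  exact DFunLike.congr_fun hcomp v

lemma RealizesPairing.comp_rep (hm₀ : IsFilter m₀) (hm₀' : IsFilter m₀')
    (hS : RealizesPairing ρ ρ' h₀ S) {p : ℝ → ℂ} (hp : IsFilter p) :
    S.comp (ρ'.rep p) = (ρ.rep p).comp S := by
  refine ρ.clm_ext ρ' hm₀ hm₀' fun k f g hf hg => ?_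
  simp only [ContinuousLinearMap.comp_apply]
  rw [ρ'.rep_gen k hp hg, hS k f _ hf ((hp.comp_pow_mul N k).mul hg), ρ.inner_rep_right hp,
    ρ.rep_gen k hp.star hf, hS k _ g ((hp.star.comp_pow_mul N k).mul hf) hg]
  exact (pairing_conj_mul_left _).symm

lemma RealizesPairing.inner_phi_rep (hS : RealizesPairing ρ ρ' h₀ S) {f : ℝ → ℂ}
    (hf : IsFilter f) : ⟪ρ.phi, ρ.rep f (S ρ'.phi)⟫ = circleInt fun x => f x * h₀ x := by
  have hphi : ρ'.phi = ρ'.gen 0 1 := by simp [gen, ρ'.rep_one]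
  rw [ρ.inner_rep_right hf, hphi]
  refine (hS 0 _ 1 hf.star isFilter_one).trans ?_
  simp [pairing]

lemma realizesPairing_of_intertwining (hU : ∀ v, S (ρ'.U v) = ρ.U (S v))
    (hrep : ∀ f, IsFilter f → S.comp (ρ'.rep f) = (ρ.rep f).comp S)
    (hphi : ∀ f, IsFilter f → ⟪ρ.phi, ρ.rep f (S ρ'.phi)⟫ = circleInt fun x => f x * h₀ x) :
    RealizesPairing ρ ρ' h₀ S := by
  have hUinv : ∀ k v, S ((ρ'.U⁻¹ ^ k) v) = (ρ.U⁻¹ ^ k) (S v) := by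
    intro k
    induction k with
    | zero => simp
    | succ k ih =>
      intro v
      simp only [pow_succ', LinearIsometryEquiv.coe_mul, Function.comp_apply,
        LinearIsometryEquiv.coe_inv, ← ih]
      rw [LinearIsometryEquiv.eq_symm_apply, ← hU, LinearIsometryEquiv.apply_symm_apply]
  intro k f g hf hg
  rw [gen, gen, hUinv, ← ContinuousLinearMap.comp_apply, hrep g hg,
    ContinuousLinearMap.comp_apply, LinearIsometryEquiv.inner_map_map, ρ.inner_rep_left hf,
    ρ.rep_apply_rep hf.star hg, hphi _ (hf.star.mul hg)]
  rfl

lemma pairing_congr (hh₀ : MemL1T h₀) {C : ℝ}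
    (hB : ∀ k f g, IsFilter f → IsFilter g →
      ‖pairing h₀ f g‖ ≤ C * ‖ρ.gen k f‖ * ‖ρ'.gen k g‖)
    {k : ℕ} {f f₁ g g₁ : ℝ → ℂ} (hf : IsFilter f) (hf₁ : IsFilter f₁) (hg : IsFilter g)
    (hg₁ : IsFilter g₁) (hff₁ : ρ.gen k f = ρ.gen k f₁) (hgg₁ : ρ'.gen k g = ρ'.gen k g₁) :
    pairing h₀ f g = pairing h₀ f₁ g₁ := by
  have h₁ : pairing h₀ (f - f₁) g = 0 := norm_le_zero_iff.1 <| by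
    simpa [ρ.gen_sub k hf hf₁, hff₁] using hB k _ _ (hf.sub hf₁) hg
  have h₂ : pairing h₀ f₁ (g - g₁) = 0 := norm_le_zero_iff.1 <| by
    simpa [ρ'.gen_sub k hg hg₁, hgg₁] using hB k _ _ hf₁ (hg.sub hg₁)
  rw [pairing_sub_left hh₀ hf hf₁ hg] at h₁
  rw [pairing_sub_right hh₀ hf₁ hg hg₁] at h₂
  linear_combination h₁ + h₂

lemma pairing_eq_of_gen_eq (hm₀ : IsFilter m₀) (hm₀' : IsFilter m₀') (hh₀ : MemL1T h₀)
    (hinv : ∀ f g, IsFilter f → IsFilter g →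
      pairing h₀ (cascade N m₀ f) (cascade N m₀' g) = pairing h₀ f g)
    {C : ℝ} (hB : ∀ k f g, IsFilter f → IsFilter g →
      ‖pairing h₀ f g‖ ≤ C * ‖ρ.gen k f‖ * ‖ρ'.gen k g‖)
    {k j : ℕ} {f f₁ g g₁ : ℝ → ℂ} (hf : IsFilter f) (hf₁ : IsFilter f₁) (hg : IsFilter g)
    (hg₁ : IsFilter g₁) (hff₁ : ρ.gen k f = ρ.gen j f₁) (hgg₁ : ρ'.gen k g = ρ'.gen j g₁) :
    pairing h₀ f g = pairing h₀ f₁ g₁ := by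
  set K := max k j
  rw [← pairing_iterate_cascade hm₀ hm₀' hinv (K - k) hf hg,
    ← pairing_iterate_cascade hm₀ hm₀' hinv (K - j) hf₁ hg₁]
  refine pairing_congr (k := K) hh₀ hB (isFilter_iterate_cascade hm₀ hf _)
    (isFilter_iterate_cascade hm₀ hf₁ _) (isFilter_iterate_cascade hm₀' hg _)
    (isFilter_iterate_cascade hm₀' hg₁ _) ?_ ?_
  · rw [← ρ.gen_eq_gen_iterate_cascade hm₀ hf (le_max_left k j),
      ← ρ.gen_eq_gen_iterate_cascade hm₀ hf₁ (le_max_right k j), hff₁]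
  · rw [← ρ'.gen_eq_gen_iterate_cascade hm₀' hg (le_max_left k j),
      ← ρ'.gen_eq_gen_iterate_cascade hm₀' hg₁ (le_max_right k j), hgg₁]

lemma exists_pairingFun (hm₀ : IsFilter m₀) (hm₀' : IsFilter m₀') (hh₀ : MemL1T h₀)
    (hinv : ∀ f g, IsFilter f → IsFilter g →
      pairing h₀ (cascade N m₀ f) (cascade N m₀' g) = pairing h₀ f g)
    {C : ℝ} (hB : ∀ k f g, IsFilter f → IsFilter g →
      ‖pairing h₀ f g‖ ≤ C * ‖ρ.gen k f‖ * ‖ρ'.gen k g‖) :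
    ∃ b : ρ.genSubmodule hm₀ → ρ'.genSubmodule hm₀' → ℂ,
      ∀ (ξ : ρ.genSubmodule hm₀) (η : ρ'.genSubmodule hm₀') k f g, IsFilter f → IsFilter g →
        (ξ : H) = ρ.gen k f → (η : H') = ρ'.gen k g → b ξ η = pairing h₀ f g := by
  choose k hf' hg' using fun (ξ : ρ.genSubmodule hm₀) (η : ρ'.genSubmodule hm₀') =>
    ρ.exists_gen_eq_gen_eq ρ' hm₀ hm₀' ξ.2 η.2
  choose f hf hξ using hf'
  choose g hg hη using hg'
  exact ⟨fun ξ η => pairing h₀ (f ξ η) (g ξ η), fun ξ η _ _ _ hf₁ hg₁ hξ₁ hη₁ =>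
    pairing_eq_of_gen_eq hm₀ hm₀' hh₀ hinv hB (hf ξ η) hf₁ (hg ξ η) hg₁
      ((hξ ξ η).symm.trans hξ₁) ((hη ξ η).symm.trans hη₁)⟩

lemma exists_pairingForm (hm₀ : IsFilter m₀) (hm₀' : IsFilter m₀') (hh₀ : MemL1T h₀)
    (hinv : ∀ f g, IsFilter f → IsFilter g →
      pairing h₀ (cascade N m₀ f) (cascade N m₀' g) = pairing h₀ f g)
    {C : ℝ} (hB : ∀ k f g, IsFilter f → IsFilter g →
      ‖pairing h₀ f g‖ ≤ C * ‖ρ.gen k f‖ * ‖ρ'.gen k g‖) :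
    ∃ B : ρ.genSubmodule hm₀ →ₗ⋆[ℂ] ρ'.genSubmodule hm₀' →ₗ[ℂ] ℂ,
      ∀ (ξ : ρ.genSubmodule hm₀) (η : ρ'.genSubmodule hm₀') k f g, IsFilter f → IsFilter g →
        (ξ : H) = ρ.gen k f → (η : H') = ρ'.gen k g → B ξ η = pairing h₀ f g := by
  obtain ⟨b, hb⟩ := exists_pairingFun hm₀ hm₀' hh₀ hinv hB
  refine ⟨LinearMap.mk₂'ₛₗ (starRingEnd ℂ) (RingHom.id ℂ) b ?_ ?_ ?_ ?_, hb⟩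
  · intro ξ₁ ξ₂ η
    obtain ⟨n, ⟨f₁, hf₁, h₁⟩, ⟨f₂, hf₂, h₂⟩, g, hg, hη⟩ :=
      ((ρ.eventually_exists_gen_eq hm₀ ξ₁.2).and ((ρ.eventually_exists_gen_eq hm₀ ξ₂.2).and
        (ρ'.eventually_exists_gen_eq hm₀' η.2))).exists
    rw [hb _ _ n _ _ (hf₁.add hf₂) hg (by rw [Submodule.coe_add, h₁, h₂, ρ.gen_add n hf₁ hf₂]) hη,
      hb _ _ n _ _ hf₁ hg h₁ hη, hb _ _ n _ _ hf₂ hg h₂ hη, pairing_add_left hh₀ hf₁ hf₂ hg]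
  · intro c ξ η
    obtain ⟨n, ⟨f, hf, hξ⟩, g, hg, hη⟩ := ρ.exists_gen_eq_gen_eq ρ' hm₀ hm₀' ξ.2 η.2
    rw [hb _ _ n _ _ (hf.smul c) hg (by rw [Submodule.coe_smul, hξ, ρ.gen_smul n c hf]) hη,
      hb _ _ n _ _ hf hg hξ hη, pairing_smul_left, smul_eq_mul]
  · intro ξ η₁ η₂
    obtain ⟨n, ⟨f, hf, hξ⟩, ⟨g₁, hg₁, h₁⟩, g₂, hg₂, h₂⟩ :=
      ((ρ.eventually_exists_gen_eq hm₀ ξ.2).and ((ρ'.eventually_exists_gen_eq hm₀' η₁.2).and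
        (ρ'.eventually_exists_gen_eq hm₀' η₂.2))).exists
    rw [hb _ _ n _ _ hf (hg₁.add hg₂) hξ (by rw [Submodule.coe_add, h₁, h₂, ρ'.gen_add n hg₁ hg₂]),
      hb _ _ n _ _ hf hg₁ hξ h₁, hb _ _ n _ _ hf hg₂ hξ h₂, pairing_add_right hh₀ hf hg₁ hg₂]
  · intro c ξ η
    obtain ⟨n, ⟨f, hf, hξ⟩, g, hg, hη⟩ := ρ.exists_gen_eq_gen_eq ρ' hm₀ hm₀' ξ.2 η.2
    rw [hb _ _ n _ _ hf (hg.smul c) hξ (by rw [Submodule.coe_smul, hη, ρ'.gen_smul n c hg]),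
      hb _ _ n _ _ hf hg hξ hη, pairing_smul_right, smul_eq_mul, RingHom.id_apply]

lemma exists_realizesPairing (hm₀ : IsFilter m₀) (hm₀' : IsFilter m₀') (hh₀ : MemL1T h₀)
    (hinv : ∀ f g, IsFilter f → IsFilter g →
      pairing h₀ (cascade N m₀ f) (cascade N m₀' g) = pairing h₀ f g)
    {C : ℝ} (hC : 0 ≤ C) (hB : ∀ k f g, IsFilter f → IsFilter g →
      ‖pairing h₀ f g‖ ≤ C * ‖ρ.gen k f‖ * ‖ρ'.gen k g‖) :
    ∃ S : H' →L[ℂ] H, RealizesPairing ρ ρ' h₀ S ∧ ‖S‖ ≤ C := by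
  obtain ⟨B, hBeq⟩ := exists_pairingForm hm₀ hm₀' hh₀ hinv hB
  obtain ⟨S, hS, hSC⟩ := exists_clm_inner_eq_of_dense (ρ.dense_genSubmodule hm₀)
    (ρ'.dense_genSubmodule hm₀') B hC fun ξ η => by
      obtain ⟨k, ⟨f, hf, hξ⟩, g, hg, hη⟩ := ρ.exists_gen_eq_gen_eq ρ' hm₀ hm₀' ξ.2 η.2
      rw [hBeq ξ η k f g hf hg hξ hη, Submodule.coe_norm, Submodule.coe_norm, hξ, hη]
      exact hB k f g hf hg
  exact ⟨S, fun k f g hf hg => (hS ⟨_, ρ.gen_mem_genSubmodule hm₀ k hf⟩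
    ⟨_, ρ'.gen_mem_genSubmodule hm₀' k hg⟩).trans (hBeq _ _ k f g hf hg rfl rfl), hSC⟩

end CyclicRep

theorem stmt_4_general {H H' : Type*}
    [NormedAddCommGroup H] [InnerProductSpace ℂ H] [CompleteSpace H]
    [NormedAddCommGroup H'] [InnerProductSpace ℂ H'] [CompleteSpace H']
    (N : ℕ) (hN : 2 ≤ N) (m₀ m₀' : ℝ → ℂ)
    (hm₀ : IsFilter m₀) (hm₀' : IsFilter m₀')
    (h h' : ℝ → ℝ)
    -- h, h' ∈ L¹(𝕋), h, h' ≥ 0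
    (hh1 : MemL1T fun x => (h x : ℂ)) (hhpos : ∀ x, 0 ≤ h x)
    (hh'1 : MemL1T fun x => (h' x : ℂ)) (hh'pos : ∀ x, 0 ≤ h' x)
    -- the cyclic representations associated to h and h'
    (ρ : CyclicRep N m₀ h H) (ρ' : CyclicRep N m₀' h' H')
    -- h₀ ∈ L¹(𝕋) with R_{m₀,m₀'}h₀ = h₀ and |h₀|² ≤ c h h'
    (h₀ : ℝ → ℂ) (hh₀1 : MemL1T h₀)
    (hh₀eig : ∀ᵐ ω ∂(volume : Measure ℝ), ruelle N m₀ m₀' h₀ ω = h₀ ω)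
    (c : ℝ) (hc : 0 < c)
    (hbound : ∀ᵐ x ∂(volume : Measure ℝ), ‖h₀ x‖ ^ 2 ≤ c * h x * h' x) :
    ∃ S : H' →L[ℂ] H,
      ((∀ v, S (ρ'.U v) = ρ.U (S v)) ∧
        (∀ f, IsFilter f → S.comp (ρ'.rep f) = (ρ.rep f).comp S) ∧
        (∀ f, IsFilter f → ⟪ρ.phi, ρ.rep f (S ρ'.phi)⟫ = circleInt fun x => f x * h₀ x)) ∧
      ‖S‖ ≤ Real.sqrt c ∧
      ∀ S' : H' →L[ℂ] H,
        ((∀ v, S' (ρ'.U v) = ρ.U (S' v)) ∧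
          (∀ f, IsFilter f → S'.comp (ρ'.rep f) = (ρ.rep f).comp S') ∧
          (∀ f, IsFilter f → ⟪ρ.phi, ρ.rep f (S' ρ'.phi)⟫ = circleInt fun x => f x * h₀ x)) →
        S' = S := by
  obtain ⟨S, hS, hSc⟩ := CyclicRep.exists_realizesPairing hm₀ hm₀' hh₀1
    (fun f g hf hg => pairing_cascade (by omega) hm₀ hm₀' hh₀1 hh₀eig hf hg)
    (Real.sqrt_nonneg c) fun k f g hf hg =>
      ρ.norm_pairing_le ρ' hh1 hhpos hh'1 hh'pos hc.le hbound k hf hg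
  refine ⟨S, ⟨hS.map_U hm₀ hm₀', fun f hf => hS.comp_rep hm₀ hm₀' hf,
    fun f hf => hS.inner_phi_rep hf⟩, hSc, ?_⟩
  rintro S' ⟨hU, hrep, hphi⟩
  exact (CyclicRep.realizesPairing_of_intertwining hU hrep hphi).eq hm₀ hm₀' hS

theorem stmt_4 {H H' : Type*}
    [NormedAddCommGroup H] [InnerProductSpace ℂ H] [CompleteSpace H]
    [NormedAddCommGroup H'] [InnerProductSpace ℂ H'] [CompleteSpace H']
    (N : ℕ) (hN : 2 ≤ N) (m₀ m₀' : ℝ → ℂ)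
    (hm₀ : IsFilter m₀) (hm₀' : IsFilter m₀')
    (hns : NonSingular m₀) (hns' : NonSingular m₀')
    (h h' : ℝ → ℝ)
    -- h, h' ∈ L¹(𝕋), h, h' ≥ 0
    (hh1 : MemL1T fun x => (h x : ℂ)) (hhpos : ∀ x, 0 ≤ h x)
    (hh'1 : MemL1T fun x => (h' x : ℂ)) (hh'pos : ∀ x, 0 ≤ h' x)
    -- R_{m₀,m₀}h = h and R_{m₀',m₀'}h' = h'
    (hheig : ∀ᵐ ω ∂(volume : Measure ℝ), ruelle N m₀ m₀ (fun x => (h x : ℂ)) ω = (h ω : ℂ))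
    (hh'eig : ∀ᵐ ω ∂(volume : Measure ℝ), ruelle N m₀' m₀' (fun x => (h' x : ℂ)) ω = (h' ω : ℂ))
    -- the cyclic representations associated to h and h'
    (ρ : CyclicRep N m₀ h H) (ρ' : CyclicRep N m₀' h' H')
    -- h₀ ∈ L¹(𝕋) with R_{m₀,m₀'}h₀ = h₀ and |h₀|² ≤ c h h'
    (h₀ : ℝ → ℂ) (hh₀1 : MemL1T h₀)
    (hh₀eig : ∀ᵐ ω ∂(volume : Measure ℝ), ruelle N m₀ m₀' h₀ ω = h₀ ω)
    (c : ℝ) (hc : 0 < c)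
    (hbound : ∀ᵐ x ∂(volume : Measure ℝ), ‖h₀ x‖ ^ 2 ≤ c * h x * h' x) :
    ∃ S : H' →L[ℂ] H,
      ((∀ v, S (ρ'.U v) = ρ.U (S v)) ∧
        (∀ f, IsFilter f → S.comp (ρ'.rep f) = (ρ.rep f).comp S) ∧
        (∀ f, IsFilter f → ⟪ρ.phi, ρ.rep f (S ρ'.phi)⟫ = circleInt fun x => f x * h₀ x)) ∧
      ‖S‖ ≤ Real.sqrt c ∧
      ∀ S' : H' →L[ℂ] H,
        ((∀ v, S' (ρ'.U v) = ρ.U (S' v)) ∧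
          (∀ f, IsFilter f → S'.comp (ρ'.rep f) = (ρ.rep f).comp S') ∧
          (∀ f, IsFilter f → ⟪ρ.phi, ρ.rep f (S' ρ'.phi)⟫ = circleInt fun x => f x * h₀ x)) →
        S' = S :=
  stmt_4_general N hN m₀ m₀' hm₀ hm₀' h h' hh1 hhpos hh'1 hh'pos ρ ρ' h₀ hh₀1 hh₀eig c hc hbound
end
end

section
/- Let m₀, m₀' ∈ L^∞(𝕋) be non-singular, h, h' ∈ L¹(𝕋) nonnegative with R_{m₀,m₀}h = h, R_{m₀',m₀'}h' = h', let (π, U, H, φ) and (π', U', H', φ') be cyclic representations associated to h and h', let h₀ ∈ L¹(𝕋), and let S : H' → H be a bounded operator with S U' = U S, S π'(f) = π(f) S and ⟨φ, π(f) S φ'⟩ = ∫_𝕋 f h₀ dμ for all f ∈ L^∞(𝕋). Then for all integers n₁, n₂ ≥ 0 and all f₁, f₂ ∈ L^∞(𝕋): if n₂ ≥ n₁, ⟨U^{-n₁} π(f₁) φ, S U'^{-n₂} π'(f₂) φ'⟩ = ∫_𝕋 conj(f₁(z^{N^{n₂-n₁}})) conj(m₀^{(n₂-n₁)}(z)) f₂(z)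 h₀(z) dμ(z), and if n₁ ≥ n₂, ⟨U^{-n₁} π(f₁) φ, S U'^{-n₂} π'(f₂) φ'⟩ = ∫_𝕋 conj(f₁(z)) m₀'^{(n₁-n₂)}(z) f₂(z^{N^{n₁-n₂}}) h₀(z) dμ(z). -/
noncomputable section

open MeasureTheory Complex
open scoped ComplexConjugate ComplexInnerProductSpace

/-- `m₀^{(n)}(ω) = m₀(ω) m₀(Nω) ⋯ m₀(N^{n-1}ω)`. -/
def mprod (N : ℕ) (m : ℝ → ℂ) (n : ℕ) : ℝ → ℂ := fun x =>
  ∏ i ∈ Finset.range n, m ((N : ℝ) ^ i * x)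

section Aux

variable {H H' : Type*}
  [NormedAddCommGroup H] [InnerProductSpace ℂ H] [CompleteSpace H]
  [NormedAddCommGroup H'] [InnerProductSpace ℂ H'] [CompleteSpace H']

lemma filt_conj {f : ℝ → ℂ} (hf : IsFilter f) : IsFilter fun x => conj (f x) := by
  obtain ⟨hm, ⟨C, hC⟩, hp⟩ := hf
  exact ⟨Complex.continuous_conj.measurable.comp hm, ⟨C, fun x => by simpa using hC x⟩,
    fun x => by simp [hp x]⟩

lemma filt_mul {f g : ℝ → ℂ} (hf : IsFilter f) (hg : IsFilter g) :
    IsFilter fun x => f x * g x := by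
  obtain ⟨hm, ⟨C, hC⟩, hp⟩ := hf
  obtain ⟨hm', ⟨C', hC'⟩, hp'⟩ := hg
  refine ⟨hm.mul hm', ⟨C * (|C'| + 1), fun x => ?_⟩, fun x => by simp [hp x, hp' x]⟩
  rw [norm_mul]
  have h1 : (0:ℝ) ≤ ‖f x‖ := norm_nonneg _
  have h2 : (0:ℝ) ≤ ‖g x‖ := norm_nonneg _
  have := hC x; have := hC' x
  nlinarith [abs_nonneg C', le_abs_self C']

lemma filt_scale {f : ℝ → ℂ} (hf : IsFilter f) (n : ℕ) :
    IsFilter fun x => f ((n : ℝ) * x) := by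
  obtain ⟨hm, ⟨C, hC⟩, hp⟩ := hf
  refine ⟨hm.comp (measurable_const_mul _), ⟨C, fun x => hC _⟩, fun x => ?_⟩
  have hper : Function.Periodic f ((n : ℕ) * (2 * Real.pi)) :=
    (Function.Periodic.nat_mul (hp : Function.Periodic f (2 * Real.pi)) n)
  have : (n : ℝ) * (x + 2 * Real.pi) = (n : ℝ) * x + (n : ℕ) * (2 * Real.pi) := by
    ring
  show f ((n : ℝ) * (x + 2 * Real.pi)) = f ((n : ℝ) * x)
  rw [this, hper]

lemma filt_pow_scale {f : ℝ → ℂ} (hf : IsFilter f) (N k : ℕ) :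
    IsFilter fun x => f ((N : ℝ) ^ k * x) := by
  have := filt_scale hf (N ^ k)
  simpa [Nat.cast_pow] using this

lemma filt_mprod {m : ℝ → ℂ} (hm : IsFilter m) (N k : ℕ) : IsFilter (mprod N m k) := by
  induction k with
  | zero =>
      refine ⟨measurable_const, ⟨1, fun x => by simp [mprod]⟩, fun x => by simp [mprod]⟩
  | succ k ih =>
      have he : mprod N m (k + 1) = fun x => mprod N m k x * m ((N : ℝ) ^ k * x) := by
        funext x; simp [mprod, Finset.prod_range_succ]
      rw [he]
      exact filt_mul ih (filt_pow_scale hm N k)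

lemma cov_iter {N : ℕ} (ρ : CovRep N H) {f : ℝ → ℂ} (hf : IsFilter f) (k : ℕ) (v : H) :
    (fun w => ρ.U w)^[k] (ρ.rep f v)
      = ρ.rep (fun x => f ((N : ℝ) ^ k * x)) ((fun w => ρ.U w)^[k] v) := by
  induction k with
  | zero => simp
  | succ k ih =>
      rw [Function.iterate_succ_apply', Function.iterate_succ_apply', ih,
        ρ.covariant _ (filt_pow_scale hf N k) _]
      have he : (fun x => f ((N : ℝ) ^ k * ((N : ℝ) * x)))
          = fun x => f ((N : ℝ) ^ (k + 1) * x) := by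
        funext x; congr 1; ring
      rw [he]

lemma rep_adj {N : ℕ} (ρ : CovRep N H) {f : ℝ → ℂ} (hf : IsFilter f) (v w : H) :
    ⟪ρ.rep f v, w⟫ = ⟪v, ρ.rep (fun x => conj (f x)) w⟫ := by
  rw [ρ.rep_star f hf]
  exact (ContinuousLinearMap.adjoint_inner_right _ _ _).symm

lemma Uk_phi {N : ℕ} {m : ℝ → ℂ} {h : ℝ → ℝ} (ρ : CyclicRep N m h H)
    (hm : IsFilter m) (k : ℕ) :
    (fun w => ρ.U w)^[k] ρ.phi = ρ.rep (mprod N m k) ρ.phi := by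
  induction k with
  | zero =>
      have h1 : mprod N m 0 = 1 := by funext x; simp [mprod]
      simp [h1, ρ.rep_one]
  | succ k ih =>
      rw [Function.iterate_succ_apply', ih,
        ρ.covariant _ (filt_mprod hm N k) _, ρ.scaling]
      have hmul := ρ.rep_mul (fun x => mprod N m k ((N : ℝ) * x)) m
        (by simpa using filt_scale (filt_mprod hm N k) N) hm
      have : ρ.rep (fun x => mprod N m k ((N : ℝ) * x)) (ρ.rep m ρ.phi)
          = ρ.rep ((fun x => mprod N m k ((N : ℝ) * x)) * m) ρ.phi := by
        rw [hmul]; rfl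
      rw [this]
      have he : (fun x => mprod N m k ((N : ℝ) * x)) * m = mprod N m (k + 1) := by
        funext x
        show mprod N m k ((N : ℝ) * x) * m x = mprod N m (k + 1) x
        unfold mprod
        rw [Finset.prod_range_succ']
        congr 1
        · exact Finset.prod_congr rfl fun i _ => by congr 1; ring
        · congr 1; simp
      rw [he]

lemma inner_symm_iter {H : Type*} [NormedAddCommGroup H] [InnerProductSpace ℂ H]
    (U : H ≃ₗᵢ[ℂ] H) (k : ℕ) (a b : H) :
    ⟪(fun w => U.symm w)^[k] a, (fun w => U.symm w)^[k] b⟫ = ⟪a, b⟫ := by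
  induction k with
  | zero => rfl
  | succ k ih =>
      rw [Function.iterate_succ_apply', Function.iterate_succ_apply',
        U.symm.inner_map_map, ih]

lemma inner_symm_left {H : Type*} [NormedAddCommGroup H] [InnerProductSpace ℂ H]
    (U : H ≃ₗᵢ[ℂ] H) (k : ℕ) (a b : H) :
    ⟪(fun w => U.symm w)^[k] a, b⟫ = ⟪a, (fun w => U w)^[k] b⟫ := by
  induction k generalizing b with
  | zero => rfl
  | succ k ih =>
      rw [Function.iterate_succ_apply', Function.iterate_succ_apply]
      have : ⟪U.symm ((fun w => U.symm w)^[k] a), b⟫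
          = ⟪(fun w => U.symm w)^[k] a, U b⟫ := by
        rw [← U.inner_map_map, U.apply_symm_apply]
      rw [this, ih]

lemma inner_symm_right {H : Type*} [NormedAddCommGroup H] [InnerProductSpace ℂ H]
    (U : H ≃ₗᵢ[ℂ] H) (k : ℕ) (a b : H) :
    ⟪a, (fun w => U.symm w)^[k] b⟫ = ⟪(fun w => U w)^[k] a, b⟫ := by
  induction k generalizing a with
  | zero => rfl
  | succ k ih =>
      rw [Function.iterate_succ_apply', Function.iterate_succ_apply]
      have : ⟪a, U.symm ((fun w => U.symm w)^[k] b)⟫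
          = ⟪U a, (fun w => U.symm w)^[k] b⟫ := by
        rw [← U.inner_map_map, U.apply_symm_apply]
      rw [this, ih]

end Aux

/- STATEMENT 5 (Lemma `lemma1` of the paper): matrix coefficients of an intertwining
operator `S` between the cyclic representations associated to `h` and `h'`.  -/
theorem stmt_5 {H H' : Type*}
    [NormedAddCommGroup H] [InnerProductSpace ℂ H] [CompleteSpace H]
    [NormedAddCommGroup H'] [InnerProductSpace ℂ H'] [CompleteSpace H']
    (N : ℕ) (hN : 2 ≤ N) (m₀ m₀' : ℝ → ℂ)
    (hm₀ : IsFilter m₀) (hm₀' : IsFilter m₀')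
    (hns : NonSingular m₀) (hns' : NonSingular m₀')
    (h h' : ℝ → ℝ)
    (hh1 : MemL1T fun x => (h x : ℂ)) (hhpos : ∀ x, 0 ≤ h x)
    (hh'1 : MemL1T fun x => (h' x : ℂ)) (hh'pos : ∀ x, 0 ≤ h' x)
    (hheig : ∀ᵐ ω ∂(volume : Measure ℝ), ruelle N m₀ m₀ (fun x => (h x : ℂ)) ω = (h ω : ℂ))
    (hh'eig : ∀ᵐ ω ∂(volume : Measure ℝ), ruelle N m₀' m₀' (fun x => (h' x : ℂ)) ω = (h' ω : ℂ))
    (ρ : CyclicRep N m₀ h H) (ρ' : CyclicRep N m₀' h' H')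
    (h₀ : ℝ → ℂ) (hh₀1 : MemL1T h₀)
    -- S intertwines the two representations and has moments given by h₀
    (S : H' →L[ℂ] H)
    (hSU : ∀ v, S (ρ'.U v) = ρ.U (S v))
    (hSrep : ∀ f, IsFilter f → S.comp (ρ'.rep f) = (ρ.rep f).comp S)
    (hSmom : ∀ f, IsFilter f → ⟪ρ.phi, ρ.rep f (S ρ'.phi)⟫ = circleInt fun x => f x * h₀ x) :
    ∀ (n₁ n₂ : ℕ) (f₁ f₂ : ℝ → ℂ), IsFilter f₁ → IsFilter f₂ →
      (n₁ ≤ n₂ →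
        ⟪(fun w => ρ.U.symm w)^[n₁] (ρ.rep f₁ ρ.phi),
            S ((fun w => ρ'.U.symm w)^[n₂] (ρ'.rep f₂ ρ'.phi))⟫
          = circleInt fun x =>
              conj (f₁ ((N : ℝ) ^ (n₂ - n₁) * x)) * conj (mprod N m₀ (n₂ - n₁) x) *
                (f₂ x * h₀ x)) ∧
      (n₂ ≤ n₁ →
        ⟪(fun w => ρ.U.symm w)^[n₁] (ρ.rep f₁ ρ.phi),
            S ((fun w => ρ'.U.symm w)^[n₂] (ρ'.rep f₂ ρ'.phi))⟫
          = circleInt fun x =>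
              conj (f₁ x) * mprod N m₀' (n₁ - n₂) x *
                (f₂ ((N : ℝ) ^ (n₁ - n₂) * x) * h₀ x)) := by
  -- S intertwines U'^{-1} and U^{-1}
  have hSsymm : ∀ v, S (ρ'.U.symm v) = ρ.U.symm (S v) := by
    intro v
    have h1 := hSU (ρ'.U.symm v)
    rw [ρ'.U.apply_symm_apply] at h1
    exact ((ρ.U.symm_apply_eq).mpr h1).symm
  have hSiter : ∀ (k : ℕ) (v : H'),
      S ((fun w => ρ'.U.symm w)^[k] v) = (fun w => ρ.U.symm w)^[k] (S v) := by
    intro k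
    induction k with
    | zero => intro v; rfl
    | succ k ih =>
        intro v
        rw [Function.iterate_succ_apply', Function.iterate_succ_apply', hSsymm, ih]
  have hSUiter : ∀ (k : ℕ) (v : H'),
      S ((fun w => ρ'.U w)^[k] v) = (fun w => ρ.U w)^[k] (S v) := by
    intro k
    induction k with
    | zero => intro v; rfl
    | succ k ih =>
        intro v
        rw [Function.iterate_succ_apply', Function.iterate_succ_apply', hSU, ih]
  have hSrep' : ∀ (f : ℝ → ℂ), IsFilter f → ∀ v, S (ρ'.rep f v) = ρ.rep f (S v) := by
    intro f hf v
    have := congrArg (fun T : H' →L[ℂ] H => T v) (hSrep f hf)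
    simpa using this
  intro n₁ n₂ f₁ f₂ hf₁ hf₂
  constructor
  · -- case n₁ ≤ n₂
    intro hle
    obtain ⟨k, rfl⟩ := Nat.exists_eq_add_of_le hle
    rw [Nat.add_sub_cancel_left]
    rw [hSiter, hSrep' f₂ hf₂, Function.iterate_add_apply]
    -- Now goal has ⟪(U.symm)^[n₁] (rep f₁ φ), (U.symm)^[n₁] ((U.symm)^[k] (rep f₂ (S φ')))⟫
    rw [inner_symm_iter, inner_symm_right]
    rw [cov_iter ρ.toCovRep hf₁ k, Uk_phi ρ hm₀ k]
    have hmul := ρ.rep_mul (fun x => f₁ ((N : ℝ) ^ k * x)) (mprod N m₀ k)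
      (filt_pow_scale hf₁ N k) (filt_mprod hm₀ N k)
    have h2 : ρ.rep (fun x => f₁ ((N : ℝ) ^ k * x)) (ρ.rep (mprod N m₀ k) ρ.phi)
        = ρ.rep ((fun x => f₁ ((N : ℝ) ^ k * x)) * mprod N m₀ k) ρ.phi := by
      rw [hmul]; rfl
    rw [h2]
    have hg : IsFilter ((fun x => f₁ ((N : ℝ) ^ k * x)) * mprod N m₀ k) :=
      filt_mul (filt_pow_scale hf₁ N k) (filt_mprod hm₀ N k)
    rw [rep_adj ρ.toCovRep hg]
    have hmul2 := ρ.rep_mul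
      (fun x => conj (((fun x => f₁ ((N : ℝ) ^ k * x)) * mprod N m₀ k) x)) f₂
      (filt_conj hg) hf₂
    have h3 : ρ.rep (fun x => conj (((fun x => f₁ ((N : ℝ) ^ k * x)) * mprod N m₀ k) x))
          (ρ.rep f₂ (S ρ'.phi))
        = ρ.rep ((fun x => conj (((fun x => f₁ ((N : ℝ) ^ k * x)) * mprod N m₀ k) x)) * f₂)
          (S ρ'.phi) := by
      rw [hmul2]; rfl
    rw [h3, hSmom ((fun x => conj (((fun x => f₁ ((N : ℝ) ^ k * x)) * mprod N m₀ k) x)) * f₂)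
      (filt_mul (filt_conj hg) hf₂)]
    apply congrArg circleInt
    funext x
    show conj (f₁ ((N : ℝ) ^ k * x) * mprod N m₀ k x) * f₂ x * h₀ x = _
    rw [map_mul]
    ring
  · -- case n₂ ≤ n₁
    intro hle
    obtain ⟨k, rfl⟩ := Nat.exists_eq_add_of_le hle
    rw [Nat.add_sub_cancel_left]
    rw [hSiter, hSrep' f₂ hf₂, Function.iterate_add_apply]
    rw [inner_symm_iter, inner_symm_left]
    -- U^[k] (rep f₂ (S φ')) = rep (f₂(N^k·)) (U^[k] (S φ'))
    rw [cov_iter ρ.toCovRep hf₂ k, ← hSUiter, Uk_phi ρ' hm₀' k,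
      hSrep' _ (filt_mprod hm₀' N k)]
    have hmul := ρ.rep_mul (fun x => f₂ ((N : ℝ) ^ k * x)) (mprod N m₀' k)
      (filt_pow_scale hf₂ N k) (filt_mprod hm₀' N k)
    have h2 : ρ.rep (fun x => f₂ ((N : ℝ) ^ k * x)) (ρ.rep (mprod N m₀' k) (S ρ'.phi))
        = ρ.rep ((fun x => f₂ ((N : ℝ) ^ k * x)) * mprod N m₀' k) (S ρ'.phi) := by
      rw [hmul]; rfl
    rw [h2, rep_adj ρ.toCovRep hf₁]
    have hg : IsFilter ((fun x => f₂ ((N : ℝ) ^ k * x)) * mprod N m₀' k) :=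
      filt_mul (filt_pow_scale hf₂ N k) (filt_mprod hm₀' N k)
    have hmul2 := ρ.rep_mul (fun x => conj (f₁ x))
      ((fun x => f₂ ((N : ℝ) ^ k * x)) * mprod N m₀' k) (filt_conj hf₁) hg
    have h3 : ρ.rep (fun x => conj (f₁ x))
          (ρ.rep ((fun x => f₂ ((N : ℝ) ^ k * x)) * mprod N m₀' k) (S ρ'.phi))
        = ρ.rep ((fun x => conj (f₁ x)) *
            ((fun x => f₂ ((N : ℝ) ^ k * x)) * mprod N m₀' k)) (S ρ'.phi) := by
      rw [hmul2]; rfl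
    rw [h3, hSmom ((fun x => conj (f₁ x)) * ((fun x => f₂ ((N : ℝ) ^ k * x)) * mprod N m₀' k))
      (filt_mul (filt_conj hf₁) hg)]
    apply congrArg circleInt
    funext x
    show conj (f₁ x) * (f₂ ((N : ℝ) ^ k * x) * mprod N m₀' k x) * h₀ x = _
    ring
end
end

section
/- Let N ≥ 2 be an integer, let m₀ : ℝ → ℂ be a 2π-periodic function with m₀(2rπ/N) = 0 for every r ∈ {1, …, N-1}, and let g : ℝ → ℂ satisfy g(ω) = N^{-1/2} m₀(ω/N) g(ω/N) for all ω ∈ ℝ. Then g(2kπ) = 0 for every nonzero integer k. -/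
/- STATEMENT 12: if m₀ is 2π-periodic with m₀(2rπ/N) = 0 for r = 1, …, N-1, and g
satisfies the Fourier-domain scaling equation g(ω) = N^{-1/2} m₀(ω/N) g(ω/N), then
g(2kπ) = 0 for every nonzero integer k. -/

noncomputable section

theorem stmt_12 (N : ℕ) (hN : 2 ≤ N) (m₀ g : ℝ → ℂ)
    (hper : ∀ x, m₀ (x + 2 * Real.pi) = m₀ x)
    (hzero : ∀ r : ℕ, 1 ≤ r → r < N → m₀ (2 * Real.pi * r / N) = 0)
    (hscal : ∀ ω : ℝ, g ω = ((Real.sqrt N : ℝ) : ℂ)⁻¹ * m₀ (ω / N) * g (ω / N)) :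
    ∀ k : ℤ, k ≠ 0 → g (2 * Real.pi * k) = 0 := by
  have hNR : (N : ℝ) ≠ 0 := by positivity
  have hNZ : (N : ℤ) ≠ 0 := by positivity
  have hP : Function.Periodic m₀ (2 * Real.pi) := hper
  have hPint : ∀ (x : ℝ) (n : ℤ), m₀ (x + n * (2 * Real.pi)) = m₀ x :=
    fun x n => (hP.int_mul n) x
  have hPint' : ∀ (x : ℝ) (n : ℤ), m₀ (x + (n : ℝ) * (2 * Real.pi)) = m₀ x := hPint
  have key : ∀ n : ℕ, ∀ k : ℤ, k.natAbs = n → k ≠ 0 → g (2 * Real.pi * k) = 0 := by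
    intro n
    induction n using Nat.strong_induction_on with
    | _ n ih =>
      intro k hkn hk
      by_cases hdiv : (N : ℤ) ∣ k
      · obtain ⟨q, rfl⟩ := hdiv
        have hq : q ≠ 0 := by rintro rfl; simp at hk
        have hlt : q.natAbs < n := by
          subst hkn
          rw [Int.natAbs_mul, Int.natAbs_natCast]
          have hqa : 0 < q.natAbs := Int.natAbs_pos.mpr hq
          nlinarith
        have hdivreal : (2 * Real.pi * ((N : ℤ) * q : ℤ)) / N = 2 * Real.pi * q := by
          push_cast
          field_simp
        rw [hscal, hdivreal, ih q.natAbs hlt q rfl hq, mul_zero]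
      · -- k not divisible by N
        set r : ℤ := k % N with hr
        have hr0 : 0 ≤ r := Int.emod_nonneg k hNZ
        have hrN : r < N := Int.emod_lt_of_pos k (by positivity)
        have hrne : r ≠ 0 := fun h => hdiv (Int.dvd_of_emod_eq_zero h)
        have hkeq : k = N * (k / N) + r := (Int.mul_ediv_add_emod k N).symm
        have hm : m₀ (2 * Real.pi * k / N) = 0 := by
          obtain ⟨q, hq2⟩ : ∃ q : ℤ, k = N * q + r := ⟨k / N, hkeq⟩
          have heq : (2 * Real.pi * k) / N
              = 2 * Real.pi * r / N + (q : ℝ) * (2 * Real.pi) := by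
            rw [hq2]
            push_cast
            field_simp
            ring
          rw [heq, hPint']
          have hcast : (r : ℝ) = ((r.toNat : ℕ) : ℝ) := by
            exact_mod_cast (Int.toNat_of_nonneg hr0).symm
          rw [hcast]
          exact hzero r.toNat (by omega) (by omega)
        rw [hscal, hm, mul_zero, zero_mul]
  intro k hk
  exact key k.natAbs k rfl hk
end
end

section
/- Let N ≥ 2 be an integer, m : ℝ → ℂ any function, and g, g' : ℝ → ℂ functions satisfying g(ω) = N^{-1/2} m(ω/N) g(ω/N) and g'(ω) = N^{-1/2} m(ω/N) g'(ω/N) for all ω ∈ ℝ. If g and g' are continuous at 0 and g'(ω) ≠ 0 for all ω ∈ ℝ, then g(x) = (g(0)/g'(0)) · g'(x) for every x ∈ ℝ; in particular g is a constant multiple of g'. -/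
/- STATEMENT 19: two solutions g, g' of the same Fourier-domain scaling equation
(with filter m and scale N ≥ 2) that are continuous at 0, with g' nowhere vanishing,
are proportional: g = (g(0)/g'(0)) · g'. -/

noncomputable section

theorem stmt_19 (N : ℕ) (hN : 2 ≤ N) (m g g' : ℝ → ℂ)
    (hg : ∀ ω : ℝ, g ω = ((Real.sqrt N : ℝ) : ℂ)⁻¹ * m (ω / N) * g (ω / N))
    (hg' : ∀ ω : ℝ, g' ω = ((Real.sqrt N : ℝ) : ℂ)⁻¹ * m (ω / N) * g' (ω / N))
    (hgc : ContinuousAt g 0) (hg'c : ContinuousAt g' 0)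
    (hne : ∀ ω, g' ω ≠ 0) :
    ∀ x : ℝ, g x = g 0 / g' 0 * g' x := by
  set h : ℝ → ℂ := fun x => g x / g' x with hh
  have hstep : ∀ ω : ℝ, h ω = h (ω / N) := by
    intro ω
    have hm : (((Real.sqrt N : ℝ) : ℂ)⁻¹ * m (ω / N)) ≠ 0 := by
      intro hz
      have := hg' ω
      rw [hz, zero_mul] at this
      exact hne ω this
    simp only [hh]
    rw [hg ω, hg' ω]
    exact mul_div_mul_left _ _ hm
  have hiter : ∀ (ω : ℝ) (n : ℕ), h ω = h (ω / (N : ℝ) ^ n) := by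
    intro ω n
    induction n with
    | zero => simp
    | succ k ih =>
      rw [ih, hstep (ω / (N : ℝ) ^ k)]
      congr 1
      rw [div_div, pow_succ]
  intro x
  have hNlt : 1 < (N : ℝ) := by exact_mod_cast lt_of_lt_of_le one_lt_two (by exact_mod_cast hN)
  have htend : Filter.Tendsto (fun n : ℕ => x / (N : ℝ) ^ n) Filter.atTop (nhds 0) := by
    have : Filter.Tendsto (fun n : ℕ => ((N : ℝ) ^ n)⁻¹) Filter.atTop (nhds 0) :=
      tendsto_inv_atTop_zero.comp (tendsto_pow_atTop_atTop_of_one_lt hNlt)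
    simpa [div_eq_mul_inv] using this.const_mul x
  have hhc : ContinuousAt h 0 := hgc.div hg'c (hne 0)
  have : Filter.Tendsto (fun n : ℕ => h (x / (N : ℝ) ^ n)) Filter.atTop (nhds (h 0)) :=
    hhc.tendsto.comp htend
  have hconst : Filter.Tendsto (fun _ : ℕ => h x) Filter.atTop (nhds (h 0)) := by
    simpa using this.congr (fun n => (hiter x n).symm)
  have hx0 : h x = h 0 := tendsto_nhds_unique tendsto_const_nhds hconst
  have : g x / g' x = g 0 / g' 0 := hx0
  calc g x = g x / g' x * g' x := (div_mul_cancel₀ _ (hne x)).symm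
    _ = g 0 / g' 0 * g' x := by rw [this]
end
end
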